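/- If G is a cubic graph (every vertex of G has degree 3), then the 2-coalition number of G satisfies C_2(G) = 4. -/

import Mathlib

open SimpleGraph

/-- A set `S` is a `k`-dominating set of `G` if every vertex outside `S`
has at least `k` neighbors in `S`. -/
def KDominatingSet {V : Type*} (G : SimpleGraph V) (k : ℕ) (S : Set V) : Prop :=
  ∀ v ∉ S, k ≤ (S ∩ G.neighborSet v).ncard

/-- Two disjoint sets `A` and `B` form a `k`-coalition in `G` if neither is a
`k`-dominating set of `G` but their union is. -/
def KCoalition {V : Type*} (G : SimpleGraph V) (k : ℕ) (A B : Set V) : Prop :=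
  Disjoint A B ∧ ¬ KDominatingSet G k A ∧ ¬ KDominatingSet G k B ∧
    KDominatingSet G k (A ∪ B)

/-- A `k`-coalition partition of `G` is a partition of the vertex set in which every
part is either a `k`-dominating set of cardinality `k` or forms a `k`-coalition with
another part. -/
def KCoalitionPartition {V : Type*} (G : SimpleGraph V) (k : ℕ) (P : Finset (Set V)) : Prop :=
  (∀ A ∈ P, A.Nonempty) ∧
  (P : Set (Set V)).PairwiseDisjoint id ∧
  (⋃ A ∈ P, A) = (Set.univ : Set V) ∧
  ∀ A ∈ P, (KDominatingSet G k A ∧ A.ncard = k) ∨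
    ∃ B ∈ P, B ≠ A ∧ KCoalition G k A B

/-- The `k`-coalition number of `G`: the maximum cardinality of a
`k`-coalition partition of `G`. -/
noncomputable def kCoalitionNumber {V : Type*} (G : SimpleGraph V) (k : ℕ) : ℕ :=
  sSup {n | ∃ P : Finset (Set V), KCoalitionPartition G k P ∧ P.card = n}

/-!
Lower bound: choose `f : V → Bool` minimising the number of monochromatic edges. Then every
vertex has at most one neighbour of its own colour (else recolouring it would help), so each
colour class `T` is 2-dominating, while for `x ∈ T` neither `{x}` nor `T \ {x}` is; splitting
both classes this way gives a 2-coalition partition with four parts.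

Upper bound, for maximum degree at most 3: every vertex outside a 2-dominating part of size 2 is
adjacent to both of its vertices, which leaves room for at most three further parts. Otherwise
every part lies in a coalition. The unions of two disjoint coalitions would be disjoint
2-dominating sets, which cover every vertex (a vertex outside both would need four neighbours),
so with a fifth part any two coalitions share a part. Then some part `A` has four coalition
partners; but a vertex `v ∉ A` with `a ≤ 1` neighbours in `A` lies outside three of them, so it
has at least `a + 3 (2 - a) ≥ 4` neighbours.
-/

open Finset

lemma Finset.sum_sum_eq_two_mul_sum_add_of_symm {α : Type*} [Fintype α] [DecidableEq α]
    {c : α → α → ℕ} (hsymm : ∀ a b, c a b = c b a) (x : α) (hx : c x x = 0) :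
    ∑ a, ∑ b, c a b = 2 * ∑ b, c x b + ∑ a ∈ univ.erase x, ∑ b ∈ univ.erase x, c a b := by
  have hcol : ∑ a ∈ univ.erase x, c a x = ∑ b, c x b := by
    rw [sum_erase univ (f := (c · x)) hx]
    exact sum_congr rfl fun a _ => hsymm a x
  calc ∑ a, ∑ b, c a b = ∑ b, c x b + ∑ a ∈ univ.erase x, ∑ b, c a b :=
        (add_sum_erase _ _ (mem_univ x)).symm
    _ = ∑ b, c x b + ∑ a ∈ univ.erase x, (c a x + ∑ b ∈ univ.erase x, c a b) := by
        simp_rw [add_sum_erase univ (c _) (mem_univ x)]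
    _ = _ := by rw [sum_add_distrib, hcol]; ring

lemma SimpleGraph.ncard_neighborSet {V : Type*} [Fintype V] (G : SimpleGraph V)
    [DecidableRel G.Adj] (v : V) : (G.neighborSet v).ncard = G.degree v := by
  rw [Set.ncard_eq_toFinset_card', ← card_neighborFinset_eq_degree, neighborFinset_def]

lemma Set.ncard_biUnion_finset {ι α : Type*} [Finite α] (t : Finset ι) {s : ι → Set α}
    (h : (t : Set ι).PairwiseDisjoint s) : (⋃ i ∈ t, s i).ncard = ∑ i ∈ t, (s i).ncard := by
  rw [← finsum_mem_coe_finset]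
  exact t.finite_toSet.ncard_biUnion (fun _ _ => Set.toFinite _) h

lemma SimpleGraph.exists_four_le_card_filter_adj {α : Type*} [DecidableEq α] (H : SimpleGraph α)
    [DecidableRel H.Adj] {P : Finset α} (hP : 5 ≤ #P) (hadj : ∀ a ∈ P, ∃ b ∈ P, H.Adj a b)
    (hmeet : ∀ a ∈ P, ∀ b ∈ P, ∀ c ∈ P, ∀ d ∈ P, H.Adj a b → H.Adj c d →
      a = c ∨ a = d ∨ b = c ∨ b = d) :
    ∃ a ∈ P, 4 ≤ #{b ∈ P | H.Adj a b} := by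
  obtain ⟨a, ha⟩ : P.Nonempty := card_pos.1 (by omega)
  obtain ⟨b, hb, hab⟩ := hadj a ha
  set S := (P.erase a).erase b with hS_def
  have hS : 3 ≤ #S := by
    rw [hS_def, card_erase_of_mem (mem_erase.2 ⟨hab.ne.symm, hb⟩), card_erase_of_mem ha]
    omega
  have hSP : S ⊆ P := (erase_subset _ _).trans (erase_subset _ _)
  have hstar {x y : α} (hxy : H.Adj x y) (hy : y ∈ P) (hyS : y ∉ S)
      (hxS : ∀ c ∈ S, H.Adj x c) : 4 ≤ #{c ∈ P | H.Adj x c} :=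
    calc 4 ≤ #(insert y S) := by rw [card_insert_of_notMem hyS]; omega
      _ ≤ _ := card_le_card <| insert_subset (mem_filter.2 ⟨hy, hxy⟩) fun c hc =>
        mem_filter.2 ⟨hSP hc, hxS c hc⟩
  have hab_or : ∀ c ∈ S, H.Adj a c ∨ H.Adj b c := by
    intro c hc
    obtain ⟨hcb, hca, -⟩ := by simpa [hS_def] using hc
    obtain ⟨d, hd, hcd⟩ := hadj c (hSP hc)
    rcases hmeet a ha b hb c (hSP hc) d hd hab hcd with h | rfl | h | rfl
    · exact absurd h.symm hca
    · exact Or.inl hcd.symm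
    · exact absurd h.symm hcb
    · exact Or.inr hcd.symm
  by_cases hA : ∀ c ∈ S, H.Adj a c
  · exact ⟨a, ha, hstar hab hb (by simp [hS_def]) hA⟩
  by_cases hB : ∀ c ∈ S, H.Adj b c
  · exact ⟨b, hb, hstar hab.symm ha (by simp [hS_def]) hB⟩
  push Not at hA hB
  exfalso
  obtain ⟨c, hc, hac⟩ := hA
  obtain ⟨d, hd, hbd⟩ := hB
  have hbc := (hab_or c hc).resolve_left hac
  have had := (hab_or d hd).resolve_right hbd
  obtain ⟨hcb, hca, -⟩ := by simpa [hS_def] using hc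
  obtain ⟨hdb, -, -⟩ := by simpa [hS_def] using hd
  rcases hmeet a ha d (hSP hd) b hb c (hSP hc) had hbc with h | rfl | rfl | rfl
  · exact hab.ne h
  · exact hca rfl
  · exact hdb rfl
  · exact hbd hbc

lemma SimpleGraph.exists_two_mul_ncard_same_le_degree {V : Type*} [Fintype V]
    (G : SimpleGraph V) [DecidableRel G.Adj] :
    ∃ f : V → Bool, ∀ v, 2 * ({u | f u = f v} ∩ G.neighborSet v).ncard ≤ G.degree v := by
  classical
  let c (f : V → Bool) (a b : V) : ℕ := if G.Adj a b ∧ f a = f b then 1 else 0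
  have hc (f : V → Bool) (x : V) : ({u | f u = f x} ∩ G.neighborSet x).ncard = ∑ b, c f x b := by
    rw [← card_filter, ← Set.ncard_coe_finset]
    congr 1
    ext u
    simp [and_comm, eq_comm]
  obtain ⟨f, -, hf⟩ := exists_min_image univ (fun f => ∑ a, ∑ b, c f a b) univ_nonempty
  refine ⟨f, fun x => ?_⟩
  set g := Function.update f x (!f x)
  have hsplit (h : V → Bool) := Finset.sum_sum_eq_two_mul_sum_add_of_symm (c := c h)
    (fun a b => by simp only [c, G.adj_comm a b, eq_comm]) x (by simp [c])
  have hrest : ∑ a ∈ univ.erase x, ∑ b ∈ univ.erase x, c g a b =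
      ∑ a ∈ univ.erase x, ∑ b ∈ univ.erase x, c f a b :=
    sum_congr rfl fun a ha => sum_congr rfl fun b hb => by
      simp [c, g, Function.update_of_ne (ne_of_mem_erase ha),
        Function.update_of_ne (ne_of_mem_erase hb)]
  have hflip : ∑ b, c f x b + ∑ b, c g x b = G.degree x := by
    rw [← sum_add_distrib, ← card_neighborFinset_eq_degree, neighborFinset_eq_filter, card_filter]
    refine sum_congr rfl fun b _ => ?_
    by_cases hb : b = x
    · simp [c, hb]
    · simp only [c, g, Function.update_self, Function.update_of_ne hb]
      cases f x <;> cases f b <;> simp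
  have := hf g (mem_univ g)
  rw [hsplit f, hsplit g, hrest] at this
  rw [hc]
  omega

section

variable {V : Type*} {G : SimpleGraph V} {k : ℕ}

lemma Set.card_le_ncard_of_pairwiseDisjoint [Finite V] {Q : Finset (Set V)} {S : Set V}
    (hQ : (Q : Set (Set V)).PairwiseDisjoint id) (hne : ∀ X ∈ Q, X.Nonempty)
    (hsub : ∀ X ∈ Q, X ⊆ S) : #Q ≤ S.ncard :=
  calc #Q = ∑ X ∈ Q, 1 := Q.card_eq_sum_ones
    _ ≤ ∑ X ∈ Q, X.ncard := sum_le_sum fun X hX => (hne X hX).ncard_pos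
    _ = (⋃ X ∈ Q, X).ncard := (Set.ncard_biUnion_finset Q hQ).symm
    _ ≤ S.ncard := Set.ncard_le_ncard (Set.iUnion₂_subset hsub)

lemma Set.sum_ncard_inter_le [Finite V] {Q : Finset (Set V)}
    (hQ : (Q : Set (Set V)).PairwiseDisjoint id) (S : Set V) :
    ∑ X ∈ Q, (X ∩ S).ncard ≤ S.ncard := by
  rw [← Set.ncard_biUnion_finset Q (s := (· ∩ S)) (hQ.mono fun X => Set.inter_subset_left)]
  exact Set.ncard_le_ncard (Set.iUnion₂_subset fun X _ => Set.inter_subset_right)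

lemma Set.ncard_union_inter {A B : Set V} [Finite V] (h : Disjoint A B) (S : Set V) :
    ((A ∪ B) ∩ S).ncard = (A ∩ S).ncard + (B ∩ S).ncard := by
  rw [Set.union_inter_distrib_right]
  exact Set.ncard_union_eq (h.mono Set.inter_subset_left Set.inter_subset_left)

namespace KDominatingSet

lemma compl_subset_neighborSet [Finite V] {A : Set V} (hA : KDominatingSet G k A)
    (hk : A.ncard ≤ k) {a : V} (ha : a ∈ A) : Aᶜ ⊆ G.neighborSet a := by
  intro v hv
  have hAv : A ∩ G.neighborSet v = A :=
    Set.eq_of_subset_of_ncard_le Set.inter_subset_left (hk.trans (hA v hv))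
  exact G.adj_symm (hAv.symm ▸ ha).2

lemma union_eq_univ [Fintype V] [DecidableRel G.Adj] (hdeg : ∀ v, G.degree v < 2 * k)
    {S T : Set V} (hS : KDominatingSet G k S) (hT : KDominatingSet G k T) (hST : Disjoint S T) :
    S ∪ T = Set.univ := by
  refine Set.eq_univ_of_forall fun v => by_contra fun hv => ?_
  rw [Set.mem_union, not_or] at hv
  have hle := Set.ncard_le_ncard (Set.inter_subset_right : (S ∪ T) ∩ G.neighborSet v ⊆ _)
  rw [Set.ncard_union_inter hST, G.ncard_neighborSet] at hle
  have := hS v hv.1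
  have := hT v hv.2
  have := hdeg v
  omega

end KDominatingSet

namespace KCoalition

lemma symm {A B : Set V} (h : KCoalition G k A B) : KCoalition G k B A :=
  ⟨h.1.symm, h.2.2.1, h.2.1, Set.union_comm A B ▸ h.2.2.2⟩

lemma irrefl (A : Set V) : ¬ KCoalition G k A A :=
  fun h => h.2.1 (by simpa using h.2.2.2)

lemma nonempty_left {A B : Set V} (h : KCoalition G k A B) : A.Nonempty :=
  Set.nonempty_iff_ne_empty.2 fun hA => h.2.2.1 (by simpa [hA] using h.2.2.2)

lemma singleton_diff [Finite V] (hk : 2 ≤ k) {S : Set V} (hS : KDominatingSet G k S)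
    {x y : V} (hx : x ∈ S) (hxS : (S ∩ G.neighborSet x).ncard < k) (hyx : y ≠ x) :
    KCoalition G k {x} (S \ {x}) := by
  refine ⟨Set.disjoint_sdiff_right, fun h => ?_, fun h => ?_, ?_⟩
  · have := (h y hyx).trans
      (Set.ncard_le_ncard (Set.inter_subset_left : {x} ∩ G.neighborSet y ⊆ {x}))
    rw [Set.ncard_singleton] at this
    omega
  · have := (h x fun hx' => hx'.2 rfl).trans
      (Set.ncard_le_ncard (Set.inter_subset_inter_left _ Set.sdiff_subset))
    omega
  · rwa [Set.union_sdiff_cancel (Set.singleton_subset_iff.2 hx)]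

end KCoalition

def coalitionGraph (G : SimpleGraph V) (k : ℕ) : SimpleGraph (Set V) where
  Adj := KCoalition G k
  symm := ⟨fun _ _ => KCoalition.symm⟩
  loopless := ⟨KCoalition.irrefl⟩

lemma card_le_three_of_kCoalition [Fintype V] [DecidableRel G.Adj]
    (hdeg : ∀ v, G.degree v ≤ 3) {A : Set V} {Q : Finset (Set V)}
    (hQ : (Q : Set (Set V)).PairwiseDisjoint id) (hAQ : ∀ X ∈ Q, KCoalition G 2 A X) :
    #Q ≤ 3 := by
  classical
  by_contra! h4
  obtain ⟨X₀, hX₀⟩ : Q.Nonempty := card_pos.1 (by omega)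
  obtain ⟨v, hvA, hv⟩ : ∃ v ∉ A, (A ∩ G.neighborSet v).ncard < 2 := by
    simpa [KDominatingSet] using (hAQ X₀ hX₀).2.1
  set a := (A ∩ G.neighborSet v).ncard
  set Q' := {X ∈ Q | v ∉ X}
  have hQ' : 3 ≤ #Q' := by
    have hv_mem : #{X ∈ Q | v ∈ X} ≤ 1 := card_le_one.2 fun X hX Y hY =>
      hQ.elim_set (mem_filter.1 hX).1 (mem_filter.1 hY).1 v (mem_filter.1 hX).2 (mem_filter.1 hY).2
    have : #{X ∈ Q | v ∈ X} + #Q' = #Q := card_filter_add_card_filter_not _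
    omega
  have hX : ∀ X ∈ Q', 2 - a ≤ (X ∩ G.neighborSet v).ncard := fun X hX => by
    obtain ⟨hXQ, hvX⟩ := mem_filter.1 hX
    have := (hAQ X hXQ).2.2.2 v (by simp [hvA, hvX])
    rw [Set.ncard_union_inter (hAQ X hXQ).1] at this
    omega
  have hsum : a + ∑ X ∈ Q', (X ∩ G.neighborSet v).ncard ≤ 3 := by
    have hAQ' : A ∉ Q' := fun h => KCoalition.irrefl A (hAQ A (mem_filter.1 h).1)
    have hdisj : ((insert A Q' : Finset (Set V)) : Set (Set V)).PairwiseDisjoint id := by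
      rw [coe_insert]
      exact (hQ.subset (coe_subset.2 (filter_subset _ _))).insert fun X hX _ =>
        (hAQ X (mem_filter.1 hX).1).1
    have := Set.sum_ncard_inter_le hdisj (G.neighborSet v)
    rw [sum_insert hAQ', G.ncard_neighborSet] at this
    exact this.trans (hdeg v)
  have hQ'sum : #Q' * (2 - a) ≤ ∑ X ∈ Q', (X ∩ G.neighborSet v).ncard := by
    simpa using card_nsmul_le_sum Q' _ _ hX
  interval_cases a <;> omega

namespace KCoalitionPartition

variable {P : Finset (Set V)}

lemma card_le_degree_add_one [Fintype V] [DecidableRel G.Adj] (hP : KCoalitionPartition G k P)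
    {A : Set V} (hA : A ∈ P) (hdom : KDominatingSet G k A) (hk : A.ncard ≤ k) {a : V}
    (ha : a ∈ A) : #P ≤ G.degree a + 1 := by
  classical
  obtain ⟨hne, hdisj, -, -⟩ := hP
  have hsub : ∀ X ∈ P.erase A, X ⊆ Aᶜ := fun X hX =>
    Set.subset_compl_iff_disjoint_left.2
      (hdisj hA (mem_of_mem_erase hX) (ne_of_mem_erase hX).symm)
  have hcard : #(P.erase A) ≤ G.degree a := calc
    #(P.erase A) ≤ (Aᶜ).ncard := Set.card_le_ncard_of_pairwiseDisjoint (hdisj.subset (by simp))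
          (fun X hX => hne X (mem_of_mem_erase hX)) hsub
    _ ≤ (G.neighborSet a).ncard := Set.ncard_le_ncard (hdom.compl_subset_neighborSet hk ha)
    _ = G.degree a := G.ncard_neighborSet a
  rw [card_erase_of_mem hA] at hcard
  omega

lemma coalitions_meet [Fintype V] [DecidableRel G.Adj] (hdeg : ∀ v, G.degree v < 2 * k)
    (hP : KCoalitionPartition G k P) (h5 : 5 ≤ #P) {A B C D : Set V} (hA : A ∈ P) (hB : B ∈ P)
    (hC : C ∈ P) (hD : D ∈ P) (hAB : KCoalition G k A B) (hCD : KCoalition G k C D) :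
    A = C ∨ A = D ∨ B = C ∨ B = D := by
  classical
  obtain ⟨hne, hdisj, -, -⟩ := hP
  by_contra! hne4
  obtain ⟨E, hE, hEABCD⟩ : ∃ E ∈ P, E ∉ ({A, B, C, D} : Finset (Set V)) :=
    exists_mem_notMem_of_card_lt_card ((card_le_four).trans_lt (by omega))
  simp only [mem_insert, mem_singleton, not_or] at hEABCD
  obtain ⟨v, hv⟩ := hne E hE
  have hcover := hAB.2.2.2.union_eq_univ hdeg hCD.2.2.2 <| by
    simp only [Set.disjoint_union_left, Set.disjoint_union_right]
    exact ⟨⟨hdisj hA hC hne4.1, hdisj hB hC hne4.2.2.1⟩,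
      hdisj hA hD hne4.2.1, hdisj hB hD hne4.2.2.2⟩
  have hvE : ∀ X ∈ P, v ∈ X → E = X := fun X hX hvX => hdisj.elim_set hE hX v hv hvX
  rcases (hcover ▸ Set.mem_univ v : v ∈ A ∪ B ∪ (C ∪ D)) with (h | h) | (h | h)
  · exact hEABCD.1 (hvE A hA h)
  · exact hEABCD.2.1 (hvE B hB h)
  · exact hEABCD.2.2.1 (hvE C hC h)
  · exact hEABCD.2.2.2 (hvE D hD h)

lemma card_le_four [Fintype V] [DecidableRel G.Adj] (hdeg : ∀ v, G.degree v ≤ 3)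
    (hP : KCoalitionPartition G 2 P) : #P ≤ 4 := by
  classical
  by_contra! h5
  have hadj : ∀ A ∈ P, ∃ B ∈ P, (coalitionGraph G 2).Adj A B := by
    intro A hA
    rcases hP.2.2.2 A hA with ⟨hdom, hcard⟩ | ⟨B, hB, -, hAB⟩
    · obtain ⟨a, ha⟩ := hP.1 A hA
      have := hP.card_le_degree_add_one hA hdom hcard.le ha
      have := hdeg a
      omega
    · exact ⟨B, hB, hAB⟩
  obtain ⟨A, -, h4⟩ := (coalitionGraph G 2).exists_four_le_card_filter_adj h5 hadj
    fun A hA B hB C hC D hD =>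
      hP.coalitions_meet (fun v => (hdeg v).trans_lt (by norm_num)) h5 hA hB hC hD
  have := card_le_three_of_kCoalition (Q := {X ∈ P | (coalitionGraph G 2).Adj A X}) hdeg
    (hP.2.1.subset (coe_subset.2 (filter_subset _ _))) fun X hX => (mem_filter.1 hX).2
  omega

end KCoalitionPartition

lemma exists_kCoalitionPartition_card_eq_four {S A B C D : Set V} (hAB : KCoalition G k A B)
    (hCD : KCoalition G k C D) (hS : A ∪ B = S) (hSc : C ∪ D = Sᶜ) :
    ∃ P : Finset (Set V), KCoalitionPartition G k P ∧ #P = 4 := by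
  classical
  have hA := hAB.nonempty_left
  have hB := hAB.symm.nonempty_left
  have hC := hCD.nonempty_left
  have hD := hCD.symm.nonempty_left
  have hSSc : Disjoint (A ∪ B) (C ∪ D) := hS ▸ hSc ▸ disjoint_compl_right
  simp only [Set.disjoint_union_left, Set.disjoint_union_right] at hSSc
  obtain ⟨⟨hAC, hBC⟩, hAD, hBD⟩ := hSSc
  have nAB : A ≠ B := hAB.1.ne hA.ne_empty
  have nCD : C ≠ D := hCD.1.ne hC.ne_empty
  refine ⟨{A, B, C, D}, ⟨?_, ?_, ?_, ?_⟩, ?_⟩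
  · simp [hA, hB, hC, hD]
  · simp [Set.pairwiseDisjoint_insert, hAB.1, hAC, hAD, hBC, hBD, hCD.1]
  · simp [← Set.union_assoc, hS, hSc]
  · simp only [mem_insert, mem_singleton]
    rintro X (rfl | rfl | rfl | rfl)
    · exact .inr ⟨B, by simp, nAB.symm, hAB⟩
    · exact .inr ⟨A, by simp, nAB, hAB.symm⟩
    · exact .inr ⟨D, by simp, nCD.symm, hCD⟩
    · exact .inr ⟨C, by simp, nCD, hCD.symm⟩
  · simp [card_insert_of_notMem, nAB, nCD, hAC.ne hA.ne_empty, hAD.ne hA.ne_empty,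
      hBC.ne hB.ne_empty, hBD.ne hB.ne_empty]

lemma SimpleGraph.exists_kCoalitionPartition_card_eq_four_of_cubic [Fintype V] [Nonempty V]
    [DecidableRel G.Adj] (hcubic : ∀ v, G.degree v = 3) :
    ∃ P : Finset (Set V), KCoalitionPartition G 2 P ∧ #P = 4 := by
  obtain ⟨f, hf⟩ := G.exists_two_mul_ncard_same_le_degree
  have hsame (v : V) : ({u | f u = f v} ∩ G.neighborSet v).ncard < 2 := by
    have := hf v
    rw [hcubic] at this
    omega
  have hdom (b : Bool) : KDominatingSet G 2 {u | f u = b} := by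
    intro v hv
    have hdisj : Disjoint {u | f u = f v} {u | f u = b} :=
      Set.disjoint_left.2 fun u hu hu' => hv (hu.symm.trans hu')
    have hcover : {u | f u = f v} ∪ {u | f u = b} = Set.univ := by
      ext u
      change f v ≠ b at hv
      revert hv
      cases f u <;> cases f v <;> cases b <;> simp
    have hsplit := Set.ncard_union_inter hdisj (G.neighborSet v)
    rw [hcover, Set.univ_inter, G.ncard_neighborSet, hcubic] at hsplit
    have := hsame v
    omega
  have hcoal (b : Bool) : ∃ x, KCoalition G 2 {x} ({u | f u = b} \ {x}) ∧
      {x} ∪ ({u | f u = b} \ {x}) = {u | f u = b} := by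
    obtain ⟨x, hx⟩ : ∃ x, f x = b := by
      obtain ⟨v⟩ := ‹Nonempty V›
      by_cases hv : f v = b
      · exact ⟨v, hv⟩
      · have := hdom b v hv
        obtain ⟨x, hx, -⟩ := Set.nonempty_of_ncard_ne_zero (s := {u | f u = b} ∩ G.neighborSet v)
          (by omega)
        exact ⟨x, hx⟩
    obtain ⟨y, hxy⟩ := (G.degree_pos_iff_exists_adj x).1 (by simp [hcubic])
    refine ⟨x, KCoalition.singleton_diff le_rfl (hdom b) hx ?_ hxy.ne.symm,
      Set.union_sdiff_cancel (Set.singleton_subset_iff.2 hx)⟩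
    simpa [hx] using hsame x
  obtain ⟨x, hx, hxS⟩ := hcoal true
  obtain ⟨y, hy, hyS⟩ := hcoal false
  exact exists_kCoalitionPartition_card_eq_four hx hy hxS (by rw [hyS]; ext; simp)

end

theorem c2_cubic {V : Type*} [Fintype V] [Nonempty V] (G : SimpleGraph V)
    [DecidableRel G.Adj] (hcubic : ∀ v : V, G.degree v = 3) :
    kCoalitionNumber G 2 = 4 :=
  IsGreatest.csSup_eq ⟨G.exists_kCoalitionPartition_card_eq_four_of_cubic hcubic,
    fun _ ⟨_, hP, hcard⟩ => hcard ▸ hP.card_le_four fun v => (hcubic v).le⟩
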